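/- Optimal execution plan on the star DAG of the Knapsack reduction: let G be the star DAG with root n_0 and leaves n_1, …, n_N, where the root has load time l_0 = ε, each materialized leaf i ∈ M has load time l_i and compute time c_i with l_i < c_i, each non-materialized leaf i ∉ M has load time ∞ and compute time c_i, and only state assignments with s(n_i) ≠ S_p for every leaf i are admissible. Then the minimum run time over admissible assignments satisfying the execution state constraint is attained by assigning S_l to every leaf in M, S_c to every leaf not in M, and loading the root (at cost ε) exactly when some leaf is computed; in particular the minimum run time equals 1[M ≠ {1,…,N}]·ε + Σ_{i∈M} l_i + Σ_{i∉M} c_i. -/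
import Mathlib


open scoped ENNReal

/-- Operator states: compute, load, prune. -/
inductive NodeState where
  | compute
  | load
  | prune
deriving DecidableEq

/-- Run time of a state assignment on the star DAG with root `none` and leaves
`some i`, `i : Fin N`: the root can be loaded at cost `ε` (it is a pure data
source, so it cannot be computed: its compute time is `∞`), each leaf `i`
costs its load time `lt i` if loaded and its compute time `ct i` if computed,
and pruned nodes cost nothing. -/
noncomputable def starRunTime (N : ℕ) (ε : ℝ≥0∞) (lt ct : Fin N → ℝ≥0∞)
    (s : Option (Fin N) → NodeState) : ℝ≥0∞ :=
  (match s none with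
    | NodeState.load => ε
    | NodeState.compute => ⊤
    | NodeState.prune => 0) +
  ∑ i : Fin N,
    (match s (some i) with
      | NodeState.load => lt i
      | NodeState.compute => ct i
      | NodeState.prune => 0)

/-- The candidate optimal assignment: load every materialized leaf (`i ∈ M`),
compute every other leaf, and load the root (at cost `ε`) exactly when some
leaf is computed (i.e. when `M ≠ univ`), pruning it otherwise. -/
def sStar (N : ℕ) (M : Finset (Fin N)) : Option (Fin N) → NodeState := fun o =>
  match o with
  | none => if M = Finset.univ then NodeState.prune else NodeState.load
  | some i => if i ∈ M then NodeState.load else NodeState.compute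

/-- Optimal execution plan on the star DAG of the Knapsack
reduction: on the star DAG with root of load time `ε`, materialized leaves
`i ∈ M` with load time `lt i < ct i`, and non-materialized leaves `i ∉ M` with
load time `∞`, among the admissible state assignments (no leaf pruned)
satisfying the execution state constraint (a computed leaf requires an
unpruned root), the minimum run time is attained by `sStar`, which assigns
`S_l` to every leaf in `M`, `S_c` to every leaf not in `M`, and loads the root
exactly when some leaf is computed; in particular the minimum run time equals
`1[M ≠ univ]·ε + Σ_{i∈M} lt i + Σ_{i∉M} ct i`. -/
theorem star_dag_optimal_plan (N : ℕ) (M : Finset (Fin N)) (ε : ℝ≥0∞)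
    (lt ct : Fin N → ℝ≥0∞)
    (hlM : ∀ i ∈ M, lt i < ct i)
    (hlnotM : ∀ i ∉ M, lt i = ⊤) :
    (∀ i : Fin N, sStar N M (some i) ≠ NodeState.prune) ∧
    (∀ i : Fin N, sStar N M (some i) = NodeState.compute →
      sStar N M none ≠ NodeState.prune) ∧
    starRunTime N ε lt ct (sStar N M) =
      (if M = Finset.univ then 0 else ε) + (∑ i ∈ M, lt i) + (∑ i ∈ Mᶜ, ct i) ∧
    (∀ s : Option (Fin N) → NodeState,
      (∀ i : Fin N, s (some i) ≠ NodeState.prune) →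
      (∀ i : Fin N, s (some i) = NodeState.compute → s none ≠ NodeState.prune) →
      starRunTime N ε lt ct (sStar N M) ≤ starRunTime N ε lt ct s) := by
  have hsum : (∑ i : Fin N,
      (match sStar N M (some i) with
        | NodeState.load => lt i
        | NodeState.compute => ct i
        | NodeState.prune => 0)) = (∑ i ∈ M, lt i) + (∑ i ∈ Mᶜ, ct i) := by
    rw [← Finset.sum_add_sum_compl M]
    congr 1
    · exact Finset.sum_congr rfl fun i hi => by simp [sStar, hi]
    · exact Finset.sum_congr rfl fun i hi => by
        simp [sStar, Finset.mem_compl.mp hi]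
  have hroot : (match sStar N M none with
      | NodeState.load => ε
      | NodeState.compute => (⊤ : ℝ≥0∞)
      | NodeState.prune => 0) = if M = Finset.univ then 0 else ε := by
    by_cases hM : M = Finset.univ <;> simp [sStar, hM]
  refine ⟨?_, ?_, ?_, ?_⟩
  · intro i
    by_cases hi : i ∈ M <;> simp [sStar, hi]
  · intro i hi
    have hiM : i ∉ M := by
      intro h; simp [sStar, h] at hi
    have hM : M ≠ Finset.univ := by
      intro h; exact hiM (h ▸ Finset.mem_univ i)
    simp [sStar, hM]
  · show _ + _ = _
    rw [hsum, hroot, add_assoc]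
  · intro s hnp hc
    have hleaf : ∀ i : Fin N,
        (match sStar N M (some i) with
          | NodeState.load => lt i
          | NodeState.compute => ct i
          | NodeState.prune => 0) ≤
        (match s (some i) with
          | NodeState.load => lt i
          | NodeState.compute => ct i
          | NodeState.prune => 0) := by
      intro i
      by_cases hi : i ∈ M
      · simp only [sStar, hi, if_pos]
        cases hs : s (some i)
        · exact (hlM i hi).le
        · exact le_refl _
        · exact absurd hs (hnp i)
      · simp only [sStar, hi, if_neg, not_false_iff]
        cases hs : s (some i)
        · exact le_refl _
        · rw [hlnotM i hi]; exact le_top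
        · exact absurd hs (hnp i)
    by_cases hall : ∃ i : Fin N, s (some i) = NodeState.compute
    · obtain ⟨i, hi⟩ := hall
      have hroot' : (match sStar N M none with
          | NodeState.load => ε
          | NodeState.compute => (⊤ : ℝ≥0∞)
          | NodeState.prune => 0) ≤
          (match s none with
            | NodeState.load => ε
            | NodeState.compute => (⊤ : ℝ≥0∞)
            | NodeState.prune => 0) := by
        rw [hroot]
        by_cases hM : M = Finset.univ
        · simp [hM]
        · simp only [hM, if_neg, not_false_iff]
          cases hs : s none
          · exact le_top
          · exact le_refl _
          · exact absurd hs (hc i hi)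
      exact add_le_add hroot' (Finset.sum_le_sum fun i _ => hleaf i)
    · push_neg at hall
      by_cases hM : M = Finset.univ
      · refine add_le_add ?_ (Finset.sum_le_sum fun i _ => hleaf i)
        rw [hroot]; simp [hM]
      · obtain ⟨i, hi⟩ : ∃ i, i ∉ M := by
          by_contra h; push_neg at h
          exact hM (Finset.eq_univ_iff_forall.mpr h)
        have hload : s (some i) = NodeState.load := by
          cases hs : s (some i)
          · exact absurd hs (hall i)
          · rfl
          · exact absurd hs (hnp i)
        have : starRunTime N ε lt ct s = ⊤ := by
          unfold starRunTime
          have : (∑ j : Fin N,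
              (match s (some j) with
                | NodeState.load => lt j
                | NodeState.compute => ct j
                | NodeState.prune => 0)) = ⊤ := by
            refine ENNReal.sum_eq_top.mpr ⟨i, Finset.mem_univ i, ?_⟩
            rw [hload, hlnotM i hi]
          rw [this, add_top]
        rw [this]; exact le_top
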